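/- arXiv:2212.05739 — 3 statements merged into one kernel-verified Lean document; each statement's English description precedes it below -/
import Mathlib

section
/- Let n ≥ 4 be an even integer. Then λ(K⁺_{n/2,n/2}) is the largest real root of the polynomial f(x) = x³ − x² − (n²/4)x + n²/4 − n; that is, f(λ(K⁺_{n/2,n/2})) = 0 and every real root x of f satisfies x ≤ λ(K⁺_{n/2,n/2}). -/
open SimpleGraph

/-- The spectral radius (largest adjacency eigenvalue) of a finite simple graph. -/
noncomputable def specRad {V : Type*} [Fintype V] (G : SimpleGraph V) : ℝ :=
  letI : DecidableEq V := Classical.decEq V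
  letI : DecidableRel G.Adj := Classical.decRel _
  sSup (spectrum ℝ (G.adjMatrix ℝ))

/-- `KplusAB a b` : the complete bipartite graph `K_{a,b}` with one extra edge
(between vertices `0` and `1`) inside the part of size `a`. -/
def KplusAB (a b : ℕ) : SimpleGraph (Fin a ⊕ Fin b) where
  Adj x y :=
    match x, y with
    | .inl i, .inl j => (i.val = 0 ∧ j.val = 1) ∨ (i.val = 1 ∧ j.val = 0)
    | .inl _, .inr _ => True
    | .inr _, .inl _ => True
    | .inr _, .inr _ => False
  symm := by constructor; rintro (i | i) (j | j) h <;> simp_all <;> tauto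
  loopless := by constructor; rintro (i | i) h <;> simp_all <;> omega

/-! Split the vertices of `K⁺_{a,b}` into three cells: the ends `0, 1` of the extra edge, the
other `a - 2` vertices of the first part, and the second part. For an eigenvector `v` with
eigenvalue `μ`, the sums `p = v₀ + v₁`, `S_A` and `S_B` over the two parts satisfy
`μ p = p + 2 S_B`, `μ S_A = p + a S_B`, `μ S_B = b S_A`, so the characteristic polynomial
`f(μ) = (μ - 1)(μ² - ab) - 2b` of this system annihilates all three sums, and then `μ (μ + 1) f(μ)`
annihilates every coordinate: the spectrum lies in `{0, -1} ∪ f⁻¹(0)`. Conversely every nonzero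
root of `f` is an eigenvalue, with an eigenvector constant on the cells, and the largest root of
`f` exceeds `1` because `f(1) = -2b < 0`. -/

open Matrix

theorem Matrix.mem_spectrum_iff_exists_mulVec_eq_smul {n : Type*} [Fintype n] [DecidableEq n]
    {A : Matrix n n ℝ} {μ : ℝ} : μ ∈ spectrum ℝ A ↔ ∃ v ≠ 0, A *ᵥ v = μ • v := by
  rw [← Matrix.spectrum_toLin', ← Module.End.hasEigenvalue_iff_mem_spectrum]
  constructor
  · intro h
    obtain ⟨v, hv⟩ := h.exists_hasEigenvector
    exact ⟨v, hv.2, by simpa using hv.apply_eq_smul⟩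
  · rintro ⟨v, hv0, hv⟩
    exact Module.End.hasEigenvalue_of_hasEigenvector
      ⟨by simpa [Module.End.mem_eigenspace_iff] using hv, hv0⟩

theorem specRad_eq_of_isGreatest {V : Type*} [Fintype V] [DecidableEq V] {G : SimpleGraph V}
    [DecidableRel G.Adj] {L : ℝ} (h : IsGreatest (spectrum ℝ (G.adjMatrix ℝ)) L) :
    specRad G = L := by
  rw [specRad, ← h.csSup_eq]
  congr!

def kplusCubic (a b x : ℝ) : ℝ := x ^ 3 - x ^ 2 - a * b * x + a * b - 2 * b

section kplusCubic

variable {a b : ℝ}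

theorem continuous_kplusCubic : Continuous (kplusCubic a b) := by
  unfold kplusCubic
  fun_prop

theorem kplusCubic_pos (ha : 0 ≤ a) (hb : 0 < b) {x : ℝ} (hx : a + b + 2 ≤ x) :
    0 < kplusCubic a b x := by
  have hx1 : 1 ≤ x - 1 := by linarith
  have hsq : 2 * b < x ^ 2 - a * b := by nlinarith
  have hprod : 2 * b < (x - 1) * (x ^ 2 - a * b) := by nlinarith
  unfold kplusCubic
  linarith

theorem exists_isGreatest_kplusCubic_roots (ha : 0 ≤ a) (hb : 0 < b) :
    ∃ L, IsGreatest {x | kplusCubic a b x = 0} L ∧ 1 < L := by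
  have h1 : kplusCubic a b 1 < 0 := by unfold kplusCubic; linarith
  obtain ⟨x₀, hx₀, hroot⟩ := intermediate_value_Ioo (by linarith : (1 : ℝ) ≤ a + b + 2)
    continuous_kplusCubic.continuousOn ⟨h1, kplusCubic_pos ha hb le_rfl⟩
  have hbdd : BddAbove {x | kplusCubic a b x = 0} := ⟨a + b + 2, fun x hx => by
    by_contra! h
    exact (kplusCubic_pos ha hb h.le).ne' hx⟩
  have hgreatest := (isClosed_eq continuous_kplusCubic continuous_const).isGreatest_csSup
    ⟨x₀, hroot⟩ hbdd
  exact ⟨_, hgreatest, hx₀.1.trans_le (hgreatest.2 hroot)⟩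

end kplusCubic

instance KplusAB.instDecidableRelAdj (a b : ℕ) : DecidableRel (KplusAB a b).Adj
  | .inl _, .inl _ => inferInstanceAs (Decidable (_ ∨ _))
  | .inl _, .inr _ => isTrue trivial
  | .inr _, .inl _ => isTrue trivial
  | .inr _, .inr _ => isFalse id

namespace KplusAB

variable {a b k : ℕ}

@[simp] theorem adj_inl_inl (i j : Fin a) :
    (KplusAB a b).Adj (.inl i) (.inl j) ↔ (i.val = 0 ∧ j.val = 1) ∨ (i.val = 1 ∧ j.val = 0) :=
  Iff.rfl

@[simp] theorem adj_inl_inr (i : Fin a) (j : Fin b) : (KplusAB a b).Adj (.inl i) (.inr j) :=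
  trivial

@[simp] theorem adj_inr_inl (i : Fin b) (j : Fin a) : (KplusAB a b).Adj (.inr i) (.inl j) :=
  trivial

@[simp] theorem not_adj_inr_inr (i j : Fin b) : ¬ (KplusAB a b).Adj (.inr i) (.inr j) := id

theorem adjMatrix_mulVec_inr (v : Fin a ⊕ Fin b → ℝ) (j : Fin b) :
    ((KplusAB a b).adjMatrix ℝ *ᵥ v) (.inr j) = ∑ i, v (.inl i) := by
  simp [mulVec, dotProduct, Fintype.sum_sum_type]

theorem adjMatrix_mulVec_inl_zero (v : Fin (k + 2) ⊕ Fin b → ℝ) :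
    ((KplusAB (k + 2) b).adjMatrix ℝ *ᵥ v) (.inl 0) = v (.inl 1) + ∑ j, v (.inr j) := by
  simp [mulVec, dotProduct, Fintype.sum_sum_type, Fin.sum_univ_succ]

theorem adjMatrix_mulVec_inl_one (v : Fin (k + 2) ⊕ Fin b → ℝ) :
    ((KplusAB (k + 2) b).adjMatrix ℝ *ᵥ v) (.inl 1) = v (.inl 0) + ∑ j, v (.inr j) := by
  simp [mulVec, dotProduct, Fintype.sum_sum_type]

theorem adjMatrix_mulVec_inl_succ_succ (v : Fin (k + 2) ⊕ Fin b → ℝ) (i : Fin k) :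
    ((KplusAB (k + 2) b).adjMatrix ℝ *ᵥ v) (.inl i.succ.succ) = ∑ j, v (.inr j) := by
  simp [mulVec, dotProduct, Fintype.sum_sum_type]

theorem mul_sum_inr_of_mulVec_eq_smul {μ : ℝ} {v : Fin a ⊕ Fin b → ℝ}
    (hv : (KplusAB a b).adjMatrix ℝ *ᵥ v = μ • v) :
    μ * ∑ j, v (.inr j) = b * ∑ i, v (.inl i) := by
  have hx (x) : μ * v x = ((KplusAB a b).adjMatrix ℝ *ᵥ v) x := by rw [hv]; rfl
  rw [Finset.mul_sum]
  simp only [hx, adjMatrix_mulVec_inr, Finset.sum_const, Finset.card_univ, Fintype.card_fin,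
    nsmul_eq_mul]

theorem mul_sum_inl_of_mulVec_eq_smul {μ : ℝ} {v : Fin (k + 2) ⊕ Fin b → ℝ}
    (hv : (KplusAB (k + 2) b).adjMatrix ℝ *ᵥ v = μ • v) :
    μ * ∑ i, v (.inl i) = v (.inl 0) + v (.inl 1) + (k + 2) * ∑ j, v (.inr j) := by
  have hx (x) : μ * v x = ((KplusAB (k + 2) b).adjMatrix ℝ *ᵥ v) x := by rw [hv]; rfl
  rw [Finset.mul_sum, Fin.sum_univ_succ, Fin.sum_univ_succ]
  simp only [hx, Fin.succ_zero_eq_one, adjMatrix_mulVec_inl_zero,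
    adjMatrix_mulVec_inl_one, adjMatrix_mulVec_inl_succ_succ, Finset.sum_const, Finset.card_univ,
    Fintype.card_fin, nsmul_eq_mul]
  ring

theorem mul_cubic_mul_eq_zero_of_mulVec_eq_smul {μ : ℝ} {v : Fin (k + 2) ⊕ Fin b → ℝ}
    (hv : (KplusAB (k + 2) b).adjMatrix ℝ *ᵥ v = μ • v) (x : Fin (k + 2) ⊕ Fin b) :
    μ * (μ + 1) * kplusCubic (k + 2) b μ * v x = 0 := by
  have hx (x) : ((KplusAB (k + 2) b).adjMatrix ℝ *ᵥ v) x = μ * v x := by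
    rw [hv, Pi.smul_apply, smul_eq_mul]
  have h0 := (adjMatrix_mulVec_inl_zero v).symm.trans (hx _)
  have h1 := (adjMatrix_mulVec_inl_one v).symm.trans (hx _)
  have hi (i : Fin k) := (adjMatrix_mulVec_inl_succ_succ v i).symm.trans (hx _)
  have hj (j : Fin b) := (adjMatrix_mulVec_inr v j).symm.trans (hx _)
  have hA := mul_sum_inl_of_mulVec_eq_smul hv
  have hB := mul_sum_inr_of_mulVec_eq_smul hv
  generalize ∑ i, v (.inl i) = SA at *
  generalize ∑ j, v (.inr j) = SB at *
  set F := kplusCubic (k + 2) b μ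
  have hFSB : F * SB = 0 := by
    unfold F kplusCubic
    linear_combination μ * (μ - 1) * hB + b * (μ - 1) * hA - b * h0 - b * h1
  have hFSA : F * SA = 0 := by
    unfold F kplusCubic
    linear_combination μ * (μ - 1) * hA - μ * h0 - μ * h1 + (2 + (k + 2) * (μ - 1)) * hB
  -- at the vertices `0` and `1`: `F (v₀ + v₁) = 0` by `hA`, and `(μ + 1) (v₀ - v₁) = 0`
  rcases x with i | j
  · cases i using Fin.cases with
    | zero =>
      linear_combination (μ / 2) * (μ + 1) * μ * hFSA - (μ / 2) * (μ + 1) * (k + 2) * hFSB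
        - (μ / 2) * (μ + 1) * F * hA + (μ / 2) * F * (h1 - h0)
    | succ i =>
      cases i using Fin.cases with
      | zero =>
        rw [Fin.succ_zero_eq_one]
        linear_combination (μ / 2) * (μ + 1) * μ * hFSA - (μ / 2) * (μ + 1) * (k + 2) * hFSB
          - (μ / 2) * (μ + 1) * F * hA + (μ / 2) * F * (h0 - h1)
      | succ i => linear_combination (μ + 1) * hFSB - (μ + 1) * F * hi i
  · linear_combination (μ + 1) * hFSA - (μ + 1) * F * hj j

theorem mul_cubic_eq_zero_of_mem_spectrum {μ : ℝ}
    (hμ : μ ∈ spectrum ℝ ((KplusAB (k + 2) b).adjMatrix ℝ)) :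
    μ * (μ + 1) * kplusCubic (k + 2) b μ = 0 := by
  obtain ⟨v, hv0, hv⟩ := Matrix.mem_spectrum_iff_exists_mulVec_eq_smul.mp hμ
  obtain ⟨x, hx⟩ := Function.ne_iff.mp hv0
  exact (mul_eq_zero.mp (mul_cubic_mul_eq_zero_of_mulVec_eq_smul hv x)).resolve_right hx

theorem mem_spectrum_of_cubic_eq_zero (hb : 0 < b) {L : ℝ} (hL : kplusCubic (k + 2) b L = 0)
    (hL0 : L ≠ 0) : L ∈ spectrum ℝ ((KplusAB (k + 2) b).adjMatrix ℝ) := by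
  -- the quotient eigenvector `(b L, b (L - 1), L (L - 1))` on the three cells, lifted
  set w : Fin (k + 2) ⊕ Fin b → ℝ :=
    Sum.elim (fun i => if (i : ℕ) < 2 then b * L else b * (L - 1)) fun _ => L * (L - 1)
  have hw0 : w (.inl 0) = b * L := by simp [w]
  have hw1 : w (.inl 1) = b * L := by simp [w]
  have hw (i : Fin k) : w (.inl i.succ.succ) = b * (L - 1) := by simp [w]
  have hwB (j : Fin b) : w (.inr j) = L * (L - 1) := rfl
  have hSB : ∑ j, w (.inr j) = b * (L * (L - 1)) := by simp [hwB]
  have hSA : ∑ i, w (.inl i) = 2 * (b * L) + k * (b * (L - 1)) := by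
    simp only [Fin.sum_univ_succ, Fin.succ_zero_eq_one, hw0, hw1, hw, Finset.sum_const,
      Finset.card_univ, Fintype.card_fin, nsmul_eq_mul]
    ring
  refine Matrix.mem_spectrum_iff_exists_mulVec_eq_smul.mpr ⟨w, ?_, ?_⟩
  · refine Function.ne_iff.mpr ⟨.inl 0, ?_⟩
    rw [hw0]
    exact mul_ne_zero (by exact_mod_cast hb.ne') hL0
  ext x
  rw [Pi.smul_apply, smul_eq_mul]
  rcases x with i | j
  · cases i using Fin.cases with
    | zero =>
      rw [adjMatrix_mulVec_inl_zero, hw0, hw1, hSB]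
      ring
    | succ i =>
      cases i using Fin.cases with
      | zero =>
        rw [Fin.succ_zero_eq_one, adjMatrix_mulVec_inl_one, hw0, hw1, hSB]
        ring
      | succ i =>
        rw [adjMatrix_mulVec_inl_succ_succ, hw, hSB]
        ring
  · rw [adjMatrix_mulVec_inr, hSA, hwB]
    unfold kplusCubic at hL
    linear_combination -hL

end KplusAB

theorem specRad_KplusAB {a b : ℕ} (ha : 2 ≤ a) (hb : 0 < b) :
    IsGreatest {x | kplusCubic a b x = 0} (specRad (KplusAB a b)) := by
  obtain ⟨k, rfl⟩ := Nat.exists_eq_add_of_le' ha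
  obtain ⟨L, hL, hL1⟩ := exists_isGreatest_kplusCubic_roots
    (a := (k + 2 : ℕ)) (b := b) (by positivity) (by exact_mod_cast hb)
  push_cast at hL ⊢
  rwa [specRad_eq_of_isGreatest ⟨KplusAB.mem_spectrum_of_cubic_eq_zero hb hL.1 (by positivity),
    fun μ hμ => ?_⟩]
  rcases mul_eq_zero.mp (KplusAB.mul_cubic_eq_zero_of_mem_spectrum hμ) with h | h
  · rcases mul_eq_zero.mp h with h | h <;> linarith
  · exact hL.2 h

theorem Kplus_even_char_poly (n : ℕ) (hn : 4 ≤ n) (hev : Even n) :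
    (specRad (KplusAB (n / 2) (n / 2))) ^ 3 - (specRad (KplusAB (n / 2) (n / 2))) ^ 2
        - ((n : ℝ) ^ 2 / 4) * specRad (KplusAB (n / 2) (n / 2)) + (n : ℝ) ^ 2 / 4 - n = 0 ∧
      ∀ x : ℝ, x ^ 3 - x ^ 2 - ((n : ℝ) ^ 2 / 4) * x + (n : ℝ) ^ 2 / 4 - n = 0 →
        x ≤ specRad (KplusAB (n / 2) (n / 2)) := by
  obtain ⟨m, rfl⟩ := hev
  have hcubic (x : ℝ) : kplusCubic m m x = x ^ 3 - x ^ 2 - (((m + m : ℕ) : ℝ) ^ 2 / 4) * x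
      + ((m + m : ℕ) : ℝ) ^ 2 / 4 - (m + m : ℕ) := by
    unfold kplusCubic
    push_cast
    ring
  rw [show (m + m) / 2 = m by omega]
  obtain ⟨hroot, hgreatest⟩ := specRad_KplusAB (by omega : 2 ≤ m) (by omega : 0 < m)
  exact ⟨(hcubic _).symm.trans hroot, fun x hx => hgreatest ((hcubic x).trans hx)⟩
end

section
/- For every integer n ≥ 4, one has λ(K⁺_{⌊n/2⌋,⌈n/2⌉})² > ⌊n²/4⌋ + 2. -/
/-!
Testing the adjacency matrix of `K⁺_{a,b}` (`2 ≤ a ≤ b`) against the vector that is `μ` on the part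
of size `a` and `a` on the other part gives the Rayleigh quotient `μ`, where `μ` is the positive
root of `a μ² = 2 μ + a² b`. Hence `λ² ≥ μ² = a b + 2 μ / a`, and `μ > a` exactly when
`a² < a b + 2`. For `a = ⌊n/2⌋`, `b = ⌈n/2⌉` one has `a b = ⌊n²/4⌋`.
-/

open SimpleGraph

open Matrix

theorem Matrix.IsHermitian.dotProduct_mulVec_le {n : Type*} [Fintype n] [DecidableEq n]
    {A : Matrix n n ℝ} (hA : A.IsHermitian) (v : n → ℝ) :
    v ⬝ᵥ (A *ᵥ v) ≤ sSup (spectrum ℝ A) * (v ⬝ᵥ v) := by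
  set c := sSup (spectrum ℝ A)
  have hpos : (algebraMap ℝ (Matrix n n ℝ) c - A).PosSemidef := by
    refine posSemidef_iff_isHermitian_and_spectrum_nonneg.mpr ⟨?_, ?_⟩
    · exact (isHermitian_diagonal_of_self_adjoint _ (.all _)).sub hA
    · rw [← spectrum.singleton_sub_eq]
      rintro _ ⟨_, rfl, μ, hμ, rfl⟩
      exact sub_nonneg.mpr (le_csSup A.finite_real_spectrum.bddAbove hμ)
  simpa [Algebra.algebraMap_eq_smul_one, sub_mulVec, smul_mulVec, dotProduct_sub] using
    hpos.dotProduct_mulVec_nonneg v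

theorem dotProduct_adjMatrix_mulVec_le_specRad {V : Type*} [Fintype V] [DecidableEq V]
    (G : SimpleGraph V) [DecidableRel G.Adj] (v : V → ℝ) :
    v ⬝ᵥ (G.adjMatrix ℝ *ᵥ v) ≤ specRad G * (v ⬝ᵥ v) := by
  convert (G.isHermitian_adjMatrix ℝ).dotProduct_mulVec_le v using 2
  unfold specRad
  congr!

theorem exists_root_gt_of_le {a b : ℝ} (ha : 0 < a) (hab : a ≤ b) :
    ∃ μ : ℝ, a < μ ∧ a * μ ^ 2 = 2 * μ + a ^ 2 * b := by
  have hb : 0 < b := ha.trans_le hab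
  set s := √(1 + a ^ 3 * b)
  have hs : s ^ 2 = 1 + a ^ 3 * b := Real.sq_sqrt (by positivity)
  have hs_gt : a ^ 2 - 1 < s := by
    apply Real.lt_sqrt_of_sq_lt
    nlinarith [pow_pos ha 3]
  refine ⟨(1 + s) / a, ?_, ?_⟩
  · rw [lt_div_iff₀ ha]
    linarith
  · field_simp
    linear_combination hs

theorem Nat.sq_div_four_eq (n : ℕ) : n ^ 2 / 4 = n / 2 * ((n + 1) / 2) := by
  rcases Nat.even_or_odd' n with ⟨m, rfl | rfl⟩
  · rw [show 2 * m / 2 = m by omega, show (2 * m + 1) / 2 = m by omega,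
      show (2 * m) ^ 2 = 4 * (m * m) by ring]
    omega
  · rw [show (2 * m + 1) / 2 = m by omega, show (2 * m + 1 + 1) / 2 = m + 1 by omega,
      show (2 * m + 1) ^ 2 = 4 * (m * (m + 1)) + 1 by ring]
    omega

section KplusAB

variable {a b : ℕ}

@[simp]
theorem KplusAB_adj_inl_inl (i j : Fin a) :
    (KplusAB a b).Adj (.inl i) (.inl j) ↔
      ((i : ℕ) = 0 ∧ (j : ℕ) = 1) ∨ ((i : ℕ) = 1 ∧ (j : ℕ) = 0) :=
  Iff.rfl

@[simp]
theorem KplusAB_adj_inl_inr (i : Fin a) (j : Fin b) : (KplusAB a b).Adj (.inl i) (.inr j) :=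
  trivial

@[simp]
theorem KplusAB_adj_inr_inl (i : Fin b) (j : Fin a) : (KplusAB a b).Adj (.inr i) (.inl j) :=
  trivial

@[simp]
theorem KplusAB_not_adj_inr_inr (i j : Fin b) : ¬(KplusAB a b).Adj (.inr i) (.inr j) :=
  id

theorem KplusAB_dotProduct_adjMatrix_mulVec_elim [DecidableRel (KplusAB a b).Adj] (ha : 2 ≤ a)
    (x z : ℝ) :
    Sum.elim (fun _ ↦ x) (fun _ ↦ z) ⬝ᵥ
        ((KplusAB a b).adjMatrix ℝ *ᵥ Sum.elim (fun _ ↦ x) (fun _ ↦ z)) =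
      2 * x ^ 2 + 2 * a * b * x * z := by
  obtain ⟨k, rfl⟩ := Nat.exists_eq_add_of_le' ha
  simp [dotProduct, mulVec, Fintype.sum_sum_type, adjMatrix_apply, Fin.sum_univ_succ]
  ring

theorem dotProduct_elim_self (x z : ℝ) :
    Sum.elim (fun _ : Fin a ↦ x) (fun _ : Fin b ↦ z) ⬝ᵥ Sum.elim (fun _ ↦ x) (fun _ ↦ z) =
      a * x ^ 2 + b * z ^ 2 := by
  simp [dotProduct, Fintype.sum_sum_type, sq]

theorem KplusAB_rayleigh_le_specRad (ha : 2 ≤ a) (x z : ℝ) :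
    2 * x ^ 2 + 2 * a * b * x * z ≤ specRad (KplusAB a b) * (a * x ^ 2 + b * z ^ 2) := by
  classical
  rw [← KplusAB_dotProduct_adjMatrix_mulVec_elim ha, ← dotProduct_elim_self]
  exact dotProduct_adjMatrix_mulVec_le_specRad _ _

theorem mul_add_two_lt_specRad_KplusAB_sq (ha : 2 ≤ a) (hab : a ≤ b) :
    (a * b + 2 : ℝ) < specRad (KplusAB a b) ^ 2 := by
  have ha0 : (0 : ℝ) < a := by exact_mod_cast (by omega : 0 < a)
  obtain ⟨μ, hμa, hμ⟩ := exists_root_gt_of_le ha0 (Nat.cast_le.mpr hab)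
  have hN : 0 < 2 * μ + 2 * a ^ 2 * b := by
    have : (0 : ℝ) ≤ a ^ 2 * b := by positivity
    linarith
  have hμ_le : μ ≤ specRad (KplusAB a b) := by
    have hray := KplusAB_rayleigh_le_specRad (b := b) ha μ a
    rw [show (a : ℝ) * μ ^ 2 + b * a ^ 2 = 2 * μ + 2 * a ^ 2 * b by linarith,
      show 2 * μ ^ 2 + 2 * a * b * μ * a = μ * (2 * μ + 2 * a ^ 2 * b) by ring] at hray
    exact le_of_mul_le_mul_right hray hN
  calc (a * b + 2 : ℝ) < μ ^ 2 := lt_of_mul_lt_mul_left (by linarith) ha0.le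
    _ ≤ specRad (KplusAB a b) ^ 2 := pow_le_pow_left₀ (by linarith) hμ_le 2

end KplusAB

theorem Kplus_sq_gt (n : ℕ) (hn : 4 ≤ n) :
    (specRad (KplusAB (n / 2) ((n + 1) / 2))) ^ 2 > ((n ^ 2 / 4 : ℕ) : ℝ) + 2 := by
  rw [Nat.sq_div_four_eq]
  push_cast
  exact mul_add_two_lt_specRad_KplusAB_sq (by omega) (by omega)
end

section
/- λ(K₁ ∨ (K₃ ∪ I₁)) > 3 = (1 + √(4·7 − 3))/2; in particular, the conclusion of the theorem that every F₂-free graph G with m edges satisfies λ(G) ≤ (1 + √(4m − 3))/2 fails for m = 7. -/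
open SimpleGraph

/-- `K₁ ∨ (K₃ ∪ I_s)` : apex vertex `0` joined to all others, vertices `1,2,3`
forming a triangle, and `s` further vertices with no other edges. -/
def coneTriangle (s : ℕ) : SimpleGraph (Fin (s + 4)) where
  Adj x y := x ≠ y ∧ (x.val = 0 ∨ y.val = 0 ∨ (x.val ≤ 3 ∧ y.val ≤ 3))
  symm := ⟨by rintro x y ⟨h1, h2⟩; exact ⟨h1.symm, by tauto⟩⟩
  loopless := ⟨by rintro x ⟨h1, _⟩; exact h1 rfl⟩

/-- `H` has a copy (a subgraph isomorphic to it) inside `G`. -/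
def ContainsCopy {α β : Type*} (H : SimpleGraph α) (G : SimpleGraph β) : Prop :=
  ∃ f : α → β, Function.Injective f ∧ ∀ x y, H.Adj x y → G.Adj (f x) (f y)

/-- The bowtie graph `F₂`: two triangles sharing exactly one vertex. -/
def bowtie : SimpleGraph (Fin 5) :=
  SimpleGraph.fromEdgeSet {s(0,1), s(0,2), s(1,2), s(0,3), s(0,4), s(3,4)}

/-- `G` is bowtie-free: it contains no subgraph isomorphic to `F₂`. -/
def BowtieFree {V : Type*} (G : SimpleGraph V) : Prop :=
  ¬ ContainsCopy bowtie G

/-! The graph has seven edges. It is bowtie-free because a bowtie on five vertices would have to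
be spanning, yet every vertex of the bowtie has degree at least 2 while the pendant vertex `4` has
degree 1. Its characteristic polynomial is `(x + 1)² (x³ - 2x² - 4x + 2)`, and the cubic factor
changes sign on `(3, 4)`, so the adjacency matrix has an eigenvalue larger than 3. -/

instance (s : ℕ) : DecidableRel (coneTriangle s).Adj := fun x y =>
  decidable_of_iff (x ≠ y ∧ (x.val = 0 ∨ y.val = 0 ∨ (x.val ≤ 3 ∧ y.val ≤ 3))) Iff.rfl

instance : DecidableRel bowtie.Adj := by
  unfold bowtie
  infer_instance

theorem Matrix.lt_sSup_spectrum_of_eval_charpoly_neg_of_pos {n : Type*} [Fintype n]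
    [DecidableEq n] (A : Matrix n n ℝ) {a b : ℝ} (hab : a ≤ b) (ha : A.charpoly.eval a < 0)
    (hb : 0 < A.charpoly.eval b) : a < sSup (spectrum ℝ A) := by
  obtain ⟨μ, hμ, hroot⟩ : ∃ μ ∈ Set.Ioo a b, A.charpoly.eval μ = 0 :=
    intermediate_value_Ioo hab A.charpoly.continuous.continuousOn ⟨ha, hb⟩
  have hspec : μ ∈ spectrum ℝ A := Matrix.mem_spectrum_of_isRoot_charpoly hroot
  exact hμ.1.trans_le (le_csSup A.finite_spectrum.bddAbove hspec)

theorem specRad_eq_sSup_spectrum {V : Type*} [Fintype V] [DecidableEq V] (G : SimpleGraph V)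
    [DecidableRel G.Adj] : specRad G = sSup (spectrum ℝ (G.adjMatrix ℝ)) := by
  unfold specRad
  congr!

theorem ContainsCopy.exists_degree_le {α β : Type*} [Fintype α] [Fintype β]
    {H : SimpleGraph α} {G : SimpleGraph β} [DecidableRel H.Adj] [DecidableRel G.Adj]
    (h : ContainsCopy H G) (hcard : Fintype.card α = Fintype.card β) (w : β) :
    ∃ v, H.degree v ≤ G.degree w := by
  obtain ⟨f, hf, hadj⟩ := h
  obtain ⟨v, rfl⟩ := ((Fintype.bijective_iff_injective_and_card f).2 ⟨hf, hcard⟩).2 w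
  refine ⟨v, Finset.card_le_card_of_injOn f (fun u hu => ?_) hf.injOn⟩
  simpa using hadj v u (by simpa using hu)

theorem ncard_edgeSet_coneTriangle_one : (coneTriangle 1).edgeSet.ncard = 7 := by
  rw [← coe_edgeFinset, Set.ncard_coe_finset]
  decide

theorem bowtieFree_coneTriangle_one : BowtieFree (coneTriangle 1) := by
  intro hcopy
  obtain ⟨v, hv⟩ := hcopy.exists_degree_le rfl 4
  have hbowtie : 2 ≤ bowtie.degree v := by revert v; decide
  have hpendant : (coneTriangle 1).degree 4 = 1 := by decide
  omega

open Matrix in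
theorem eval_charpoly_adjMatrix_coneTriangle_one (t : ℝ) :
    ((coneTriangle 1).adjMatrix ℝ).charpoly.eval t =
      (t + 1) ^ 2 * (t ^ 3 - 2 * t ^ 2 - 4 * t + 2) := by
  have hcharmatrix : scalar (Fin 5) t - (coneTriangle 1).adjMatrix ℝ =
      !![t, -1, -1, -1, -1; -1, t, -1, -1, 0; -1, -1, t, -1, 0; -1, -1, -1, t, 0; -1, 0, 0, 0, t] := by
    ext i j
    fin_cases i <;> fin_cases j <;> simp [adjMatrix_apply, coneTriangle]
  rw [eval_charpoly, hcharmatrix]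
  simp [det_succ_row_zero, Fin.sum_univ_succ, Fin.succAbove_of_castSucc_lt,
    Fin.succAbove_of_le_castSucc]
  ring

theorem three_lt_specRad_coneTriangle_one : 3 < specRad (coneTriangle 1) := by
  rw [specRad_eq_sSup_spectrum]
  apply Matrix.lt_sSup_spectrum_of_eval_charpoly_neg_of_pos _ (b := 4) (by norm_num) <;>
    · rw [eval_charpoly_adjMatrix_coneTriangle_one]
      norm_num

theorem bowtie_size_bound_fails_at_seven :
    (1 + Real.sqrt (4 * 7 - 3)) / 2 = 3 ∧
      (coneTriangle 1).edgeSet.ncard = 7 ∧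
      BowtieFree (coneTriangle 1) ∧
      specRad (coneTriangle 1) > 3 := by
  refine ⟨?_, ncard_edgeSet_coneTriangle_one, bowtieFree_coneTriangle_one,
    three_lt_specRad_coneTriangle_one⟩
  rw [show (4 * 7 - 3 : ℝ) = 5 ^ 2 by norm_num, Real.sqrt_sq (by norm_num)]
  norm_num
end
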